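/- Fix ω > 0, ε₀ > 0, μ₀ > 0, an integer n ≥ 1, and set k = (ε₀μ₀)^{1/2}; assume j_n(kω) ≠ 0, and let t₂′(ρ) and t₄′(ρ) be as defined from the transmission conditions with an interior point source. Then as ρ → 0⁺: (i) t₂′(ρ) j_n(kω) + h_n(kω) = O(ρ); and (ii) t₄′(ρ) 𝒥_n(kω) + 𝓗_n(kω) converges to i/(kω j_n(kω)), which is nonzero. Consequently, in the limit ρ → 0⁺, for any nonzero source coefficient q the corresponding interior tangential Cauchy data on the cloaking interface does not vanish: the cloaked region supports trapped, nonzero electromagnetic fields. -/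

import Mathlib

/-! Iterating `z⁻¹ d/dz` on `e^{±iz}/z` writes `j_n`, `y_n`, `h_n` as combinations of
`e^{±iz} P_±(z) / z^{n+1}` with Rayleigh polynomials `P_±`. In particular `h_n = γ P` and
`𝓗_n = γ S` share a nonvanishing factor `γ`, and `S(0) = -n P(0) ≠ 0`, so
`r(ρ) = h_n(ωρ) / 𝓗_n(ωρ) → -1/n`. Dividing numerator and denominator of `t₂′` and `t₄′` by
`𝓗_n(ωρ)` and writing `W = h_n 𝒥_n - j_n 𝓗_n` at `kω` gives
`t₂′ j_n + h_n = ρ μ₀^{-1/2} r W / D₂` and `t₄′ 𝒥_n + 𝓗_n = μ₀^{-1/2} k W / D₄`, where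
`D₂ → -ε₀^{-1/2} k j_n(kω)` and `D₄ → -μ₀^{-1/2} k j_n(kω)`. So the first is `O(ρ)` and the
second tends to `-W / j_n(kω) = i / (kω j_n(kω))`: the Rayleigh polynomials satisfy a
second-order ODE which forces their polynomial Wronskian to be a monomial, and reading off its
leading coefficient gives `W = -i/(kω)`. -/

/-- The operator `f ↦ (z ↦ f′(z)/z)` used in the Rayleigh formulas. -/
noncomputable def sphDOp (f : ℂ → ℂ) : ℂ → ℂ := fun z => deriv f z / z

/-- Spherical Bessel function of the first kind:
`j_n(z) = (−z)^n (z⁻¹ d/dz)^n (sin z / z)`. -/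
noncomputable def sbj (n : ℕ) (z : ℂ) : ℂ :=
  (-z) ^ n * sphDOp^[n] (fun w => Complex.sin w / w) z

/-- Spherical Bessel function of the second kind:
`y_n(z) = −(−z)^n (z⁻¹ d/dz)^n (cos z / z)`. -/
noncomputable def sby (n : ℕ) (z : ℂ) : ℂ :=
  -((-z) ^ n * sphDOp^[n] (fun w => Complex.cos w / w) z)

/-- Spherical Hankel function of the first kind `h_n = j_n + i y_n`. -/
noncomputable def sbh (n : ℕ) (z : ℂ) : ℂ := sbj n z + Complex.I * sby n z

/-- `𝒥_n(z) = j_n(z) + z j_n′(z)`. -/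
noncomputable def sbJ (n : ℕ) (z : ℂ) : ℂ := sbj n z + z * deriv (sbj n) z

/-- `𝓗_n(z) = h_n(z) + z h_n′(z)`. -/
noncomputable def sbH (n : ℕ) (z : ℂ) : ℂ := sbh n z + z * deriv (sbh n) z

/-- `x^{−1/2}` for a positive real `x`, as a complex number. -/
noncomputable def invSqrtC (x : ℝ) : ℂ := ((Real.sqrt x)⁻¹ : ℝ)

/-- `g(ρ) = O(ρ^s)` as `ρ → 0⁺`. -/
def IsBigORho (g : ℝ → ℂ) (s : ℝ) : Prop :=
  ∃ C : ℝ, 0 < C ∧ ∃ δ : ℝ, 0 < δ ∧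
    ∀ ρ : ℝ, 0 < ρ → ρ < δ → ‖g ρ‖ ≤ C * ρ ^ s

/-- The source transmission ratio `t₁′(ρ)`. -/
noncomputable def t1' (n : ℕ) (ω ε₀ μ₀ k ρ : ℝ) : ℂ :=
  (sbh n ((k * ω : ℝ) : ℂ) * sbJ n ((k * ω : ℝ) : ℂ)
      - sbH n ((k * ω : ℝ) : ℂ) * sbj n ((k * ω : ℝ) : ℂ)) /
  (invSqrtC μ₀ * (ρ : ℂ) * sbh n ((ω * ρ : ℝ) : ℂ) * sbJ n ((k * ω : ℝ) : ℂ)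
      - invSqrtC ε₀ * (k : ℂ) * sbH n ((ω * ρ : ℝ) : ℂ) * sbj n ((k * ω : ℝ) : ℂ))

/-- The source transmission ratio `t₂′(ρ)`. -/
noncomputable def t2' (n : ℕ) (ω ε₀ μ₀ k ρ : ℝ) : ℂ :=
  (invSqrtC ε₀ * (k : ℂ) * sbh n ((k * ω : ℝ) : ℂ) * sbH n ((ω * ρ : ℝ) : ℂ)
      - invSqrtC μ₀ * (ρ : ℂ) * sbH n ((k * ω : ℝ) : ℂ) * sbh n ((ω * ρ : ℝ) : ℂ)) /
  (invSqrtC μ₀ * (ρ : ℂ) * sbh n ((ω * ρ : ℝ) : ℂ) * sbJ n ((k * ω : ℝ) : ℂ)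
      - invSqrtC ε₀ * (k : ℂ) * sbH n ((ω * ρ : ℝ) : ℂ) * sbj n ((k * ω : ℝ) : ℂ))

/-- The source transmission ratio `t₃′(ρ)`. -/
noncomputable def t3' (n : ℕ) (ω ε₀ μ₀ k ρ : ℝ) : ℂ :=
  (sbJ n ((k * ω : ℝ) : ℂ) * sbh n ((k * ω : ℝ) : ℂ)
      - sbH n ((k * ω : ℝ) : ℂ) * sbj n ((k * ω : ℝ) : ℂ)) /
  (invSqrtC ε₀ * (ρ : ℂ) * sbh n ((ω * ρ : ℝ) : ℂ) * sbJ n ((k * ω : ℝ) : ℂ)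
      - invSqrtC μ₀ * (k : ℂ) * sbH n ((ω * ρ : ℝ) : ℂ) * sbj n ((k * ω : ℝ) : ℂ))

/-- The source transmission ratio `t₄′(ρ)`. -/
noncomputable def t4' (n : ℕ) (ω ε₀ μ₀ k ρ : ℝ) : ℂ :=
  (invSqrtC μ₀ * (k : ℂ) * sbh n ((k * ω : ℝ) : ℂ) * sbH n ((ω * ρ : ℝ) : ℂ)
      - invSqrtC ε₀ * (ρ : ℂ) * sbH n ((k * ω : ℝ) : ℂ) * sbh n ((ω * ρ : ℝ) : ℂ)) /
  (invSqrtC ε₀ * (ρ : ℂ) * sbh n ((ω * ρ : ℝ) : ℂ) * sbJ n ((k * ω : ℝ) : ℂ)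
      - invSqrtC μ₀ * (k : ℂ) * sbj n ((k * ω : ℝ) : ℂ) * sbH n ((ω * ρ : ℝ) : ℂ))


open Polynomial Complex Filter Topology Asymptotics

theorem Polynomial.eq_C_mul_X_pow_of_X_mul_derivative_eq {R : Type*} [CommRing R] [IsDomain R]
    [CharZero R] {p : R[X]} {m : ℕ} (h : X * derivative p = C (m : R) * p) :
    p = C (p.coeff m) * X ^ m := by
  ext k
  rw [coeff_C_mul_X_pow]
  split_ifs with hk
  · rw [hk]
  · have hcoeff : (k : R) * p.coeff k = m * p.coeff k := by
      have := congrArg (coeff · k) h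
      rcases k with _ | k
      · simpa [eq_comm] using this
      · simpa [coeff_derivative, mul_comm] using this
    exact (mul_eq_mul_right_iff.mp hcoeff).resolve_left (by exact_mod_cast hk)

noncomputable def rayleighStep (c : ℂ) (m : ℕ) (p : ℂ[X]) : ℂ[X] :=
  X * (C c * p + derivative p) - C (m : ℂ) * p

noncomputable def rayleighPoly (c : ℂ) : ℕ → ℂ[X]
  | 0 => 1
  | n + 1 => rayleighStep c (2 * n + 1) (rayleighPoly c n)

theorem eval_zero_rayleighStep (c : ℂ) (m : ℕ) (p : ℂ[X]) :
    (rayleighStep c m p).eval 0 = -m * p.eval 0 := by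
  simp [rayleighStep]

theorem rayleighPoly_eval_zero_ne_zero (c : ℂ) (n : ℕ) : (rayleighPoly c n).eval 0 ≠ 0 := by
  induction n with
  | zero => simp [rayleighPoly]
  | succ n ih =>
    rw [rayleighPoly, eval_zero_rayleighStep]
    exact mul_ne_zero (neg_ne_zero.mpr (Nat.cast_ne_zero.mpr (Nat.succ_ne_zero _))) ih

theorem natDegree_rayleighPoly_le (c : ℂ) (n : ℕ) : (rayleighPoly c n).natDegree ≤ n := by
  induction n with
  | zero => simp [rayleighPoly]
  | succ n ih =>
    have hinner : (C c * rayleighPoly c n + derivative (rayleighPoly c n)).natDegree ≤ n :=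
      natDegree_add_le_of_degree_le ((natDegree_C_mul_le _ _).trans ih)
        ((natDegree_derivative_le _).trans (by omega))
    refine (natDegree_sub_le _ _).trans (max_le ?_ ((natDegree_C_mul_le _ _).trans (by omega)))
    exact natDegree_mul_le.trans (by rw [natDegree_X]; omega)

theorem coeff_rayleighPoly_self (c : ℂ) (n : ℕ) : (rayleighPoly c n).coeff n = c ^ n := by
  induction n with
  | zero => simp [rayleighPoly]
  | succ n ih =>
    have htop : (rayleighPoly c n).coeff (n + 1) = 0 :=
      coeff_eq_zero_of_natDegree_lt ((natDegree_rayleighPoly_le c n).trans_lt n.lt_succ_self)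
    rw [rayleighPoly, rayleighStep, coeff_sub, coeff_X_mul, coeff_add, coeff_C_mul,
      coeff_derivative, coeff_C_mul, ih, htop, pow_succ]
    ring

theorem rayleighPoly_ode (c : ℂ) (n : ℕ) :
    X * (derivative (derivative (rayleighPoly c n)) + C (2 * c) * derivative (rayleighPoly c n))
      = C (2 * n : ℂ) * (C c * rayleighPoly c n + derivative (rayleighPoly c n)) := by
  induction n with
  | zero => simp [rayleighPoly]
  | succ n ih =>
    have dih := congrArg derivative ih
    simp only [derivative_mul, derivative_add, derivative_C, derivative_X] at dih
    simp only [rayleighPoly, rayleighStep, derivative_mul, derivative_sub,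
      derivative_C, derivative_X, derivative_one, derivative_ofNat, derivative_natCast,
      map_add, map_mul, map_one, map_ofNat, map_natCast, Nat.cast_add, Nat.cast_mul,
      Nat.cast_ofNat, Nat.cast_one, derivative_zero] at *
    linear_combination (C c * X - (2 * (n : ℂ[X]) + 2)) * ih + X * dih

theorem rayleighPoly_wronskian (c : ℂ) (n : ℕ) :
    rayleighPoly c n * derivative (rayleighPoly (-c) n)
        - derivative (rayleighPoly c n) * rayleighPoly (-c) n
        - C (2 * c) * (rayleighPoly c n * rayleighPoly (-c) n)
      = C (-(2 * c) * (c * -c) ^ n) * X ^ (2 * n) := by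
  rcases n.eq_zero_or_pos with rfl | hn
  · simp [rayleighPoly]
  set P := rayleighPoly c n
  set Q := rayleighPoly (-c) n
  set W := P * derivative Q - derivative P * Q - C (2 * c) * (P * Q)
  have hW : X * derivative W = C ((2 * n : ℕ) : ℂ) * W := by
    have hP := rayleighPoly_ode c n
    have hQ := rayleighPoly_ode (-c) n
    simp only [W, derivative_sub, derivative_mul, derivative_C, derivative_ofNat, map_mul,
      map_neg, map_ofNat, Nat.cast_mul, Nat.cast_ofNat] at hP hQ ⊢
    linear_combination P * hQ - Q * hP
  have hPQ : (P * Q).coeff (2 * n) = (c * -c) ^ n := by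
    rw [two_mul, coeff_mul_add_eq_of_natDegree_le (natDegree_rayleighPoly_le c n)
      (natDegree_rayleighPoly_le (-c) n), coeff_rayleighPoly_self, coeff_rayleighPoly_self,
      mul_pow]
  have hlow : ∀ {A B : ℂ[X]}, A.natDegree ≤ n → B.natDegree ≤ n →
      (A * derivative B).coeff (2 * n) = 0 := fun {A B} hA hB =>
    coeff_eq_zero_of_natDegree_lt (natDegree_mul_le.trans_lt (by
      have := natDegree_derivative_le B
      omega))
  have hW2n : W.coeff (2 * n) = -(2 * c) * (c * -c) ^ n := by
    have hPQ' : (P * derivative Q).coeff (2 * n) = 0 :=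
      hlow (natDegree_rayleighPoly_le c n) (natDegree_rayleighPoly_le (-c) n)
    have hQP' : (Q * derivative P).coeff (2 * n) = 0 :=
      hlow (natDegree_rayleighPoly_le (-c) n) (natDegree_rayleighPoly_le c n)
    rw [coeff_sub, coeff_sub, coeff_C_mul, hPQ, mul_comm (derivative P), hPQ', hQP']
    ring
  rw [eq_C_mul_X_pow_of_X_mul_derivative_eq hW, hW2n]

noncomputable def expPolyDiv (c : ℂ) (p : ℂ[X]) (m : ℕ) (z : ℂ) : ℂ :=
  exp (c * z) * p.eval z / z ^ m

theorem hasDerivAt_expPolyDiv (c : ℂ) (p : ℂ[X]) (m : ℕ) {z : ℂ} (hz : z ≠ 0) :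
    HasDerivAt (expPolyDiv c p m) (expPolyDiv c (rayleighStep c m p) (m + 1) z) z := by
  have h := ((((hasDerivAt_id z).const_mul c).cexp).mul (p.hasDerivAt z)).div
    (hasDerivAt_pow m z) (pow_ne_zero m hz)
  have hpow : (m : ℂ) * z ^ (m - 1) = m * z ^ m / z := by
    rcases m with _ | m
    · simp
    · field_simp; simp [pow_succ]
  rw [hpow] at h
  refine h.congr_deriv ?_
  simp only [expPolyDiv, rayleighStep, eval_sub, eval_mul, eval_add, eval_X, eval_C, id,
    Pi.mul_apply]
  field_simp
  ring

theorem expPolyDiv_div (c : ℂ) (p : ℂ[X]) (m : ℕ) (z : ℂ) :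
    expPolyDiv c p m z / z = expPolyDiv c p (m + 1) z := by
  rw [expPolyDiv, expPolyDiv, div_div, pow_succ]

theorem pow_mul_expPolyDiv (c : ℂ) (p : ℂ[X]) (n m : ℕ) {z : ℂ} (hz : z ≠ 0) :
    z ^ n * expPolyDiv c p (n + m) z = expPolyDiv c p m z := by
  rw [expPolyDiv, expPolyDiv, pow_add]
  field_simp

theorem sphDOp_iterate_exp_div (a b c d : ℂ) (n : ℕ) {z : ℂ} (hz : z ≠ 0) :
    sphDOp^[n] (fun w => a * exp (c * w) / w + b * exp (d * w) / w) z
      = a * expPolyDiv c (rayleighPoly c n) (2 * n + 1) z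
        + b * expPolyDiv d (rayleighPoly d n) (2 * n + 1) z := by
  induction n generalizing z with
  | zero => simp [expPolyDiv, rayleighPoly, mul_div_assoc]
  | succ n ih =>
    have hloc : sphDOp^[n] (fun w => a * exp (c * w) / w + b * exp (d * w) / w) =ᶠ[𝓝 z]
        fun w => a * expPolyDiv c (rayleighPoly c n) (2 * n + 1) w
          + b * expPolyDiv d (rayleighPoly d n) (2 * n + 1) w := by
      filter_upwards [isOpen_ne.mem_nhds hz] with w hw using ih hw
    have hderiv : HasDerivAt (fun w => a * expPolyDiv c (rayleighPoly c n) (2 * n + 1) w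
          + b * expPolyDiv d (rayleighPoly d n) (2 * n + 1) w)
        (a * expPolyDiv c (rayleighPoly c (n + 1)) (2 * n + 2) z
          + b * expPolyDiv d (rayleighPoly d (n + 1)) (2 * n + 2) z) z :=
      ((hasDerivAt_expPolyDiv c _ _ hz).const_mul a).add
        ((hasDerivAt_expPolyDiv d _ _ hz).const_mul b)
    rw [Function.iterate_succ_apply', sphDOp, hloc.deriv_eq, hderiv.deriv, add_div,
      mul_div_assoc, mul_div_assoc, expPolyDiv_div, expPolyDiv_div, mul_add_one]

theorem add_mul_deriv_eq_of_forall_ne_zero {f : ℂ → ℂ} {a b c d : ℂ} {p q : ℂ[X]} {m : ℕ}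
    (hf : ∀ w ≠ 0, f w = a * expPolyDiv c p (m + 1) w + b * expPolyDiv d q (m + 1) w)
    {z : ℂ} (hz : z ≠ 0) :
    f z + z * deriv f z = a * expPolyDiv c (rayleighStep c m p) (m + 1) z
      + b * expPolyDiv d (rayleighStep d m q) (m + 1) z := by
  have hloc : f =ᶠ[𝓝 z]
      fun w => a * expPolyDiv c p (m + 1) w + b * expPolyDiv d q (m + 1) w := by
    filter_upwards [isOpen_ne.mem_nhds hz] with w hw using hf w hw
  have hderiv : HasDerivAt
      (fun w => a * expPolyDiv c p (m + 1) w + b * expPolyDiv d q (m + 1) w)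
      (a * expPolyDiv c (rayleighStep c (m + 1) p) (m + 2) z
        + b * expPolyDiv d (rayleighStep d (m + 1) q) (m + 2) z) z :=
    ((hasDerivAt_expPolyDiv c p _ hz).const_mul a).add
      ((hasDerivAt_expPolyDiv d q _ hz).const_mul b)
  rw [hf z hz, hloc.deriv_eq, hderiv.deriv]
  simp only [expPolyDiv, rayleighStep, eval_sub, eval_mul, eval_add, eval_X, eval_C]
  field_simp
  push_cast
  ring

theorem sbj_zero {n : ℕ} (hn : n ≠ 0) : sbj n 0 = 0 := by
  simp [sbj, hn]

section ClosedForms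

variable (n : ℕ) {z : ℂ}

theorem sbj_eq (hz : z ≠ 0) :
    sbj n z = (-1) ^ n * (-(I / 2) * expPolyDiv I (rayleighPoly I n) (n + 1) z
      + I / 2 * expPolyDiv (-I) (rayleighPoly (-I) n) (n + 1) z) := by
  have hsin : (fun w => sin w / w)
      = fun w => -(I / 2) * exp (I * w) / w + I / 2 * exp (-I * w) / w := by
    funext w
    simp only [Complex.sin]
    ring_nf
  have hI := pow_mul_expPolyDiv I (rayleighPoly I n) n (n + 1) hz
  have hI' := pow_mul_expPolyDiv (-I) (rayleighPoly (-I) n) n (n + 1) hz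
  rw [sbj, hsin, sphDOp_iterate_exp_div _ _ _ _ n hz, neg_pow,
    show 2 * n + 1 = n + (n + 1) by ring]
  linear_combination (-1) ^ n * (-(I / 2) * hI + I / 2 * hI')

theorem sby_eq (hz : z ≠ 0) :
    sby n z = -((-1) ^ n * (1 / 2 * expPolyDiv I (rayleighPoly I n) (n + 1) z
      + 1 / 2 * expPolyDiv (-I) (rayleighPoly (-I) n) (n + 1) z)) := by
  have hcos : (fun w => cos w / w)
      = fun w => 1 / 2 * exp (I * w) / w + 1 / 2 * exp (-I * w) / w := by
    funext w
    simp only [Complex.cos]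
    ring_nf
  have hI := pow_mul_expPolyDiv I (rayleighPoly I n) n (n + 1) hz
  have hI' := pow_mul_expPolyDiv (-I) (rayleighPoly (-I) n) n (n + 1) hz
  rw [sby, hcos, sphDOp_iterate_exp_div _ _ _ _ n hz, neg_pow,
    show 2 * n + 1 = n + (n + 1) by ring]
  linear_combination -(-1) ^ n * (1 / 2 * hI + 1 / 2 * hI')

theorem sbh_eq (hz : z ≠ 0) :
    sbh n z = (-1) ^ n * -I * expPolyDiv I (rayleighPoly I n) (n + 1) z := by
  rw [sbh, sbj_eq n hz, sby_eq n hz]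
  ring

theorem sbJ_eq (hz : z ≠ 0) :
    sbJ n z
      = (-1) ^ n * (-(I / 2)) * expPolyDiv I (rayleighStep I n (rayleighPoly I n)) (n + 1) z
        + (-1) ^ n * (I / 2)
          * expPolyDiv (-I) (rayleighStep (-I) n (rayleighPoly (-I) n)) (n + 1) z :=
  add_mul_deriv_eq_of_forall_ne_zero (fun w hw => by rw [sbj_eq n hw]; ring) hz

theorem sbH_eq (hz : z ≠ 0) :
    sbH n z = (-1) ^ n * -I * expPolyDiv I (rayleighStep I n (rayleighPoly I n)) (n + 1) z := by
  simpa [sbH] using add_mul_deriv_eq_of_forall_ne_zero (f := sbh n) (a := (-1) ^ n * -I)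
    (c := I) (p := rayleighPoly I n) (b := 0) (d := 0) (q := 0) (m := n)
    (fun w hw => by rw [sbh_eq n hw, zero_mul, add_zero]) hz

theorem sbh_div_sbH (hz : z ≠ 0) :
    sbh n z / sbH n z
      = (rayleighPoly I n).eval z / (rayleighStep I n (rayleighPoly I n)).eval z := by
  set γ := (-1) ^ n * -I * exp (I * z) / z ^ (n + 1)
  have hγ : γ ≠ 0 := by
    have : (-1 : ℂ) ^ n ≠ 0 := pow_ne_zero _ (by norm_num)
    have : z ^ (n + 1) ≠ 0 := pow_ne_zero _ hz
    simp_all [γ, exp_ne_zero]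
  calc sbh n z / sbH n z
      = γ * (rayleighPoly I n).eval z / (γ * (rayleighStep I n (rayleighPoly I n)).eval z) := by
        rw [sbh_eq n hz, sbH_eq n hz]
        congr 1 <;> simp only [expPolyDiv, γ] <;> ring
    _ = _ := mul_div_mul_left _ _ hγ

end ClosedForms

theorem rayleighPoly_mul_rayleighStep_sub (c : ℂ) (n : ℕ) :
    rayleighPoly c n * rayleighStep (-c) n (rayleighPoly (-c) n)
        - rayleighPoly (-c) n * rayleighStep c n (rayleighPoly c n)
      = C (-(2 * c) * (c * -c) ^ n) * X ^ (2 * n + 1) := by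
  rw [pow_succ, ← mul_assoc, ← rayleighPoly_wronskian]
  simp only [rayleighStep, map_neg, map_mul, map_ofNat]
  ring

theorem sbh_mul_sbJ_sub_sbj_mul_sbH (n : ℕ) {z : ℂ} (hz : z ≠ 0) :
    sbh n z * sbJ n z - sbj n z * sbH n z = -I / z := by
  set P := rayleighPoly I n
  set Q := rayleighPoly (-I) n
  have hpoly := congrArg (eval z) (rayleighPoly_mul_rayleighStep_sub I n)
  simp only [eval_sub, eval_mul, eval_C, eval_pow, eval_X, mul_neg, I_mul_I, neg_neg,
    one_pow, mul_one] at hpoly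
  have hexp : exp (I * z) * exp (-I * z) = 1 := by rw [← Complex.exp_add]; simp
  have hsign : ((-1 : ℂ) ^ n) ^ 2 = 1 := by rw [← pow_mul, mul_comm, pow_mul]; norm_num
  calc sbh n z * sbJ n z - sbj n z * sbH n z
      = ((-1) ^ n) ^ 2 * (exp (I * z) * exp (-I * z)) * (1 / 2)
          * (P.eval z * (rayleighStep (-I) n Q).eval z - Q.eval z * (rayleighStep I n P).eval z)
          / (z ^ (n + 1)) ^ 2 := by
        rw [sbh_eq n hz, sbJ_eq n hz, sbj_eq n hz, sbH_eq n hz]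
        simp only [expPolyDiv]
        ring_nf
        rw [I_sq]
        ring
    _ = -I / z := by
        rw [hsign, hexp, hpoly]
        field_simp
        ring

section SmallArgument

variable {n : ℕ}

theorem eval_zero_rayleighStep_rayleighPoly_ne_zero (hn : n ≠ 0) (c : ℂ) :
    (rayleighStep c n (rayleighPoly c n)).eval 0 ≠ 0 := by
  rw [eval_zero_rayleighStep]
  exact mul_ne_zero (neg_ne_zero.mpr (Nat.cast_ne_zero.mpr hn))
    (rayleighPoly_eval_zero_ne_zero c n)

theorem tendsto_sbh_div_sbH (hn : n ≠ 0) :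
    Tendsto (fun z => sbh n z / sbH n z) (𝓝[≠] 0) (𝓝 (-(n : ℂ)⁻¹)) := by
  have hS := eval_zero_rayleighStep_rayleighPoly_ne_zero hn I
  have hlim : (rayleighPoly I n).eval 0 / (rayleighStep I n (rayleighPoly I n)).eval 0
      = -(n : ℂ)⁻¹ := by
    rw [eval_zero_rayleighStep, neg_mul, div_neg, div_mul_cancel_right₀
      (rayleighPoly_eval_zero_ne_zero I n)]
  rw [← hlim]
  refine ((((rayleighPoly I n).continuous.tendsto 0).div
    ((rayleighStep I n (rayleighPoly I n)).continuous.tendsto 0) hS).mono_left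
      nhdsWithin_le_nhds).congr' ?_
  filter_upwards [self_mem_nhdsWithin] with z hz using (sbh_div_sbH n hz).symm

theorem eventually_sbH_ne_zero (hn : n ≠ 0) : ∀ᶠ z in 𝓝[≠] 0, sbH n z ≠ 0 := by
  have hS : ∀ᶠ z in 𝓝[≠] 0, (rayleighStep I n (rayleighPoly I n)).eval z ≠ 0 :=
    ((rayleighStep I n _).continuous.continuousAt.eventually_ne
      (eval_zero_rayleighStep_rayleighPoly_ne_zero hn I)).filter_mono nhdsWithin_le_nhds
  filter_upwards [hS, self_mem_nhdsWithin] with z hSz hz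
  rw [sbH_eq n hz, expPolyDiv]
  have : z ^ (n + 1) ≠ 0 := pow_ne_zero _ hz
  simp_all [exp_ne_zero]

end SmallArgument

section Transmission

variable {K : Type*} [Field K] {a b k ρ h₀ H₀ j₀ J₀ hx Hx : K}

theorem transmission_mul_j_add_h (hH : Hx ≠ 0)
    (hD : b * ρ * (hx / Hx) * J₀ - a * k * j₀ ≠ 0) :
    (a * k * h₀ * Hx - b * ρ * H₀ * hx) / (b * ρ * hx * J₀ - a * k * Hx * j₀) * j₀ + h₀
      = ρ * (b * (hx / Hx) * (h₀ * J₀ - j₀ * H₀) / (b * ρ * (hx / Hx) * J₀ - a * k * j₀)) := by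
  obtain ⟨r, rfl⟩ : ∃ r, hx = r * Hx := ⟨hx / Hx, (div_mul_cancel₀ _ hH).symm⟩
  rw [mul_div_cancel_right₀ _ hH] at hD ⊢
  rw [show b * ρ * (r * Hx) * J₀ - a * k * Hx * j₀ = Hx * (b * ρ * r * J₀ - a * k * j₀) by ring]
  field_simp
  ring

theorem transmission_mul_J_add_H (hH : Hx ≠ 0)
    (hD : b * ρ * (hx / Hx) * J₀ - a * k * j₀ ≠ 0) :
    (a * k * h₀ * Hx - b * ρ * H₀ * hx) / (b * ρ * hx * J₀ - a * k * j₀ * Hx) * J₀ + H₀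
      = a * k * (h₀ * J₀ - j₀ * H₀) / (b * ρ * (hx / Hx) * J₀ - a * k * j₀) := by
  obtain ⟨r, rfl⟩ : ∃ r, hx = r * Hx := ⟨hx / Hx, (div_mul_cancel₀ _ hH).symm⟩
  rw [mul_div_cancel_right₀ _ hH] at hD ⊢
  rw [show b * ρ * (r * Hx) * J₀ - a * k * j₀ * Hx = Hx * (b * ρ * r * J₀ - a * k * j₀) by ring]
  field_simp
  ring

end Transmission

theorem isBigORho_of_isBigO {g : ℝ → ℂ} {s : ℝ} (h : g =O[𝓝[>] 0] fun ρ => ρ ^ s) :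
    IsBigORho g s := by
  obtain ⟨C, hC⟩ := h.bound
  obtain ⟨δ, hδ, hIoo⟩ := mem_nhdsGT_iff_exists_Ioo_subset.mp hC
  refine ⟨max C 1, by positivity, δ, hδ, fun ρ hρ hρδ => ?_⟩
  calc ‖g ρ‖ ≤ C * ‖ρ ^ s‖ := hIoo ⟨hρ, hρδ⟩
    _ ≤ max C 1 * ρ ^ s := by
        rw [Real.norm_of_nonneg (Real.rpow_nonneg hρ.le s)]
        exact mul_le_mul_of_nonneg_right (le_max_left _ _) (Real.rpow_nonneg hρ.le s)

theorem tendsto_ofReal_mul_nhdsGT_zero {ω : ℝ} (hω : ω ≠ 0) :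
    Tendsto (fun ρ : ℝ => ((ω * ρ : ℝ) : ℂ)) (𝓝[>] 0) (𝓝[≠] 0) := by
  refine tendsto_nhdsWithin_iff.mpr ⟨?_, ?_⟩
  · have : Continuous fun ρ : ℝ => ((ω * ρ : ℝ) : ℂ) := by fun_prop
    simpa using (this.tendsto 0).mono_left nhdsWithin_le_nhds
  · filter_upwards [self_mem_nhdsWithin] with ρ hρ
    exact ofReal_ne_zero.mpr (mul_ne_zero hω (ne_of_gt hρ))

section SmallRadius

variable {a b k h₀ H₀ j₀ J₀ r₀ : ℂ} {hx Hx : ℝ → ℂ}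

theorem tendsto_transmission_denominator (hr : Tendsto (fun ρ => hx ρ / Hx ρ) (𝓝[>] 0) (𝓝 r₀)) :
    Tendsto (fun ρ : ℝ => b * ρ * (hx ρ / Hx ρ) * J₀ - a * k * j₀) (𝓝[>] 0)
      (𝓝 (-(a * k * j₀))) := by
  have hρ : Tendsto (fun ρ : ℝ => (ρ : ℂ)) (𝓝[>] 0) (𝓝 0) :=
    (continuous_ofReal.tendsto' 0 0 ofReal_zero).mono_left nhdsWithin_le_nhds
  simpa using
    ((((tendsto_const_nhds (x := b)).mul hρ).mul hr).mul_const J₀).sub_const (a * k * j₀)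

theorem isBigORho_transmission_mul_j_add_h (hakj : a * k * j₀ ≠ 0)
    (hr : Tendsto (fun ρ => hx ρ / Hx ρ) (𝓝[>] 0) (𝓝 r₀)) (hH : ∀ᶠ ρ in 𝓝[>] 0, Hx ρ ≠ 0) :
    IsBigORho (fun ρ : ℝ => (a * k * h₀ * Hx ρ - b * ρ * H₀ * hx ρ)
      / (b * ρ * hx ρ * J₀ - a * k * Hx ρ * j₀) * j₀ + h₀) 1 := by
  have hD₀ : -(a * k * j₀) ≠ 0 := neg_ne_zero.mpr hakj
  have hD := tendsto_transmission_denominator (a := a) (b := b) (k := k) (j₀ := j₀) (J₀ := J₀) hr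
  have hbounded :=
    (((tendsto_const_nhds (x := b)).mul hr).mul_const (h₀ * J₀ - j₀ * H₀)).div hD hD₀
  have hρ : (fun ρ : ℝ => (ρ : ℂ)) =O[𝓝[>] 0] fun ρ => ρ ^ (1 : ℝ) :=
    isBigO_of_le _ fun ρ => by simp
  refine isBigORho_of_isBigO ((hρ.mul (hbounded.isBigO_one ℝ)).congr' ?_
    (Eventually.of_forall fun _ => mul_one _))
  filter_upwards [hH, hD.eventually_ne hD₀] with ρ hHρ hDρ
  exact (transmission_mul_j_add_h hHρ hDρ).symm

theorem tendsto_transmission_mul_J_add_H (hakj : a * k * j₀ ≠ 0)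
    (hr : Tendsto (fun ρ => hx ρ / Hx ρ) (𝓝[>] 0) (𝓝 r₀)) (hH : ∀ᶠ ρ in 𝓝[>] 0, Hx ρ ≠ 0) :
    Tendsto (fun ρ : ℝ => (a * k * h₀ * Hx ρ - b * ρ * H₀ * hx ρ)
      / (b * ρ * hx ρ * J₀ - a * k * j₀ * Hx ρ) * J₀ + H₀) (𝓝[>] 0)
      (𝓝 (-(h₀ * J₀ - j₀ * H₀) / j₀)) := by
  have hD₀ : -(a * k * j₀) ≠ 0 := neg_ne_zero.mpr hakj
  have hD := tendsto_transmission_denominator (a := a) (b := b) (k := k) (j₀ := j₀) (J₀ := J₀) hr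
  have hlim : a * k * (h₀ * J₀ - j₀ * H₀) / -(a * k * j₀) = -(h₀ * J₀ - j₀ * H₀) / j₀ := by
    rw [div_neg, neg_div, mul_div_mul_left _ _ (left_ne_zero_of_mul hakj)]
  rw [← hlim]
  refine (tendsto_const_nhds.div hD hD₀).congr' ?_
  filter_upwards [hH, hD.eventually_ne hD₀] with ρ hHρ hDρ
  exact (transmission_mul_J_add_H hHρ hDρ).symm

end SmallRadius

theorem invSqrtC_ne_zero {x : ℝ} (hx : 0 < x) : invSqrtC x ≠ 0 :=
  ofReal_ne_zero.mpr (inv_ne_zero (Real.sqrt_pos.mpr hx).ne')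

theorem interior_cauchy_data_nonvanishing_general
    (ω ε₀ μ₀ : ℝ) (hε : 0 < ε₀) (hμ : 0 < μ₀)
    (n : ℕ) (hn : 1 ≤ n) (k : ℝ)
    (hjk : sbj n ((k * ω : ℝ) : ℂ) ≠ 0) :
    IsBigORho (fun ρ => t2' n ω ε₀ μ₀ k ρ * sbj n ((k * ω : ℝ) : ℂ)
      + sbh n ((k * ω : ℝ) : ℂ)) 1 ∧
    Filter.Tendsto (fun ρ : ℝ => t4' n ω ε₀ μ₀ k ρ * sbJ n ((k * ω : ℝ) : ℂ)
        + sbH n ((k * ω : ℝ) : ℂ)) (nhdsWithin 0 (Set.Ioi 0))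
      (nhds (Complex.I / (((k * ω : ℝ) : ℂ) * sbj n ((k * ω : ℝ) : ℂ)))) ∧
    Complex.I / (((k * ω : ℝ) : ℂ) * sbj n ((k * ω : ℝ) : ℂ)) ≠ 0 := by
  set z₀ : ℂ := ((k * ω : ℝ) : ℂ)
  have hn₀ : n ≠ 0 := Nat.one_le_iff_ne_zero.mp hn
  -- `j_n` vanishes at the origin, so `kω ≠ 0`.
  have hz₀ : z₀ ≠ 0 := fun h => hjk (by rw [h, sbj_zero hn₀])
  have hkω : k ≠ 0 ∧ ω ≠ 0 := mul_ne_zero_iff.mp (ofReal_ne_zero.mp hz₀)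
  have hakj : ∀ {x : ℝ}, 0 < x → invSqrtC x * k * sbj n z₀ ≠ 0 := fun hx =>
    mul_ne_zero (mul_ne_zero (invSqrtC_ne_zero hx) (ofReal_ne_zero.mpr hkω.1)) hjk
  have hx := tendsto_ofReal_mul_nhdsGT_zero hkω.2
  have hr := (tendsto_sbh_div_sbH hn₀).comp hx
  have hH := hx.eventually (eventually_sbH_ne_zero hn₀)
  have hlim : -(sbh n z₀ * sbJ n z₀ - sbj n z₀ * sbH n z₀) / sbj n z₀ = I / (z₀ * sbj n z₀) := by
    rw [sbh_mul_sbJ_sub_sbj_mul_sbH n hz₀]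
    field_simp
  exact ⟨isBigORho_transmission_mul_j_add_h (hakj hε) hr hH,
    hlim ▸ tendsto_transmission_mul_J_add_H (hakj hμ) hr hH,
    div_ne_zero I_ne_zero (mul_ne_zero hz₀ hjk)⟩

/-- As `ρ → 0⁺`: (i) `t₂′(ρ)j_n(kω) + h_n(kω) = O(ρ)`, and
(ii) `t₄′(ρ)𝒥_n(kω) + 𝓗_n(kω)` converges to `i/(kω j_n(kω))`, which is nonzero.
Hence in the limit the interior tangential Cauchy data on the cloaking interface does
not vanish: the cloaked region supports trapped, nonzero electromagnetic fields. -/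
theorem interior_cauchy_data_nonvanishing
    (ω ε₀ μ₀ : ℝ) (hω : 0 < ω) (hε : 0 < ε₀) (hμ : 0 < μ₀)
    (n : ℕ) (hn : 1 ≤ n) (k : ℝ) (hk : k = Real.sqrt (ε₀ * μ₀))
    (hjk : sbj n ((k * ω : ℝ) : ℂ) ≠ 0) :
    IsBigORho (fun ρ => t2' n ω ε₀ μ₀ k ρ * sbj n ((k * ω : ℝ) : ℂ)
      + sbh n ((k * ω : ℝ) : ℂ)) 1 ∧
    Filter.Tendsto (fun ρ : ℝ => t4' n ω ε₀ μ₀ k ρ * sbJ n ((k * ω : ℝ) : ℂ)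
        + sbH n ((k * ω : ℝ) : ℂ)) (nhdsWithin 0 (Set.Ioi 0))
      (nhds (Complex.I / (((k * ω : ℝ) : ℂ) * sbj n ((k * ω : ℝ) : ℂ)))) ∧
    Complex.I / (((k * ω : ℝ) : ℂ) * sbj n ((k * ω : ℝ) : ℂ)) ≠ 0 :=
  interior_cauchy_data_nonvanishing_general ω ε₀ μ₀ hε hμ n hn k hjk
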